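/- arXiv:2204.10957 — 4 statements merged into one kernel-verified Lean document; each statement's English description precedes it below -/
import Mathlib

section
/- Fix I_0 > 0 with I_0 ≤ I_max (the maximum of I(X;Y_N) over quantizers). If q* maximizes H(Y_N|Y) over the set of quantizers q satisfying I(X;Y_N)(q) ≥ I_0, then the constraint is active at q*: I(X;Y_N)(q*) = I_0. -/
/-!
If the constraint were slack at `qs`, continuity of `I(X;Y_N)` on `Δ` would make `qs` a local
maximizer of `H(Y_N|Y)` on `Δ`, hence a global one because `H(Y_N|Y)` is concave. But on `Δ`,
`H(Y_N|Y) ≤ log N` with equality only at the uniform quantizer, where `I(X;Y_N) = 0 < I_0`.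
-/

open Real

/-- Marginal of X from the joint distribution P(x,y). -/
noncomputable def pX {Kx K : ℕ} (P : Fin Kx → Fin K → ℝ) (x : Fin Kx) : ℝ :=
  ∑ k, P x k

/-- Marginal of Y from the joint distribution P(x,y). -/
noncomputable def pY {Kx K : ℕ} (P : Fin Kx → Fin K → ℝ) (k : Fin K) : ℝ :=
  ∑ x, P x k

/-- Joint distribution of (X, Y_N) induced by the quantizer q. -/
noncomputable def pXN {Kx K N : ℕ} (P : Fin Kx → Fin K → ℝ)
    (q : Fin N → Fin K → ℝ) (x : Fin Kx) (ν : Fin N) : ℝ :=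
  ∑ k, P x k * q ν k

/-- Marginal of Y_N induced by the quantizer q and a distribution p on Y. -/
noncomputable def pN {K N : ℕ} (p : Fin K → ℝ) (q : Fin N → Fin K → ℝ) (ν : Fin N) : ℝ :=
  ∑ k, p k * q ν k

/-- Conditional entropy H(Y_N|Y). -/
noncomputable def Hcond {K N : ℕ} (p : Fin K → ℝ) (q : Fin N → Fin K → ℝ) : ℝ :=
  -∑ k, p k * ∑ ν, q ν k * Real.log (q ν k)

/-- Mutual information I(Y;Y_N) induced by the quantizer q. -/
noncomputable def IYN {K N : ℕ} (p : Fin K → ℝ) (q : Fin N → Fin K → ℝ) : ℝ :=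
  ∑ ν, ∑ k, q ν k * p k * Real.log (q ν k / pN p q ν)

/-- Mutual information I(X;Y_N) induced by the quantizer q through X → Y → Y_N. -/
noncomputable def IXN {Kx K N : ℕ} (P : Fin Kx → Fin K → ℝ)
    (q : Fin N → Fin K → ℝ) : ℝ :=
  ∑ x, ∑ ν, pXN P q x ν * Real.log (pXN P q x ν / (pX P x * pN (pY P) q ν))

/-- Mutual information I(X;Y). -/
noncomputable def IXY {Kx K : ℕ} (P : Fin Kx → Fin K → ℝ) : ℝ :=
  ∑ x, ∑ k, P x k * Real.log (P x k / (pX P x * pY P k))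

/-- The set Δ of stochastic quantizers. -/
def Δset (N K : ℕ) : Set (Fin N → Fin K → ℝ) :=
  {q | (∀ ν k, 0 ≤ q ν k) ∧ ∀ k, ∑ ν, q ν k = 1}

/-- The (ambient-coordinate) gradient of I(X;Y_N): ∂I/∂q_{νk} = ∑_x p(x,y_k) ln(p(x|ν)/p(x)). -/
noncomputable def gradI {Kx K N : ℕ} (P : Fin Kx → Fin K → ℝ)
    (q : Fin N → Fin K → ℝ) (ν : Fin N) (k : Fin K) : ℝ :=
  ∑ x, P x k * Real.log ((pXN P q x ν / pN (pY P) q ν) / pX P x)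

open Finset

section Entropy

variable {ι : Type*} [Fintype ι]

theorem card_mul_log_card_sub_sum_negMulLog {w : ι → ℝ} (hw : ∑ i, w i = 1) :
    (Fintype.card ι : ℝ) * (log (Fintype.card ι) - ∑ i, negMulLog (w i)) =
      ∑ i, (1 - Fintype.card ι * w i - negMulLog (Fintype.card ι * w i)) := by
  simp only [negMulLog_mul, sum_sub_distrib, sum_add_distrib, ← mul_sum, ← sum_mul, hw,
    sum_const, card_univ, nsmul_eq_mul]
  simp only [negMulLog]
  ring

theorem sum_negMulLog_le_log_card {w : ι → ℝ} (hw₀ : ∀ i, 0 ≤ w i) (hw : ∑ i, w i = 1) :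
    ∑ i, negMulLog (w i) ≤ log (Fintype.card ι) := by
  have hn : (0 : ℝ) < Fintype.card ι := by
    have : Nonempty ι := by
      by_contra h; simp [not_nonempty_iff.1 h] at hw
    exact_mod_cast Fintype.card_pos
  have key := card_mul_log_card_sub_sum_negMulLog hw
  have : 0 ≤ ∑ i, (1 - Fintype.card ι * w i - negMulLog (Fintype.card ι * w i)) :=
    sum_nonneg fun i _ => sub_nonneg.2 (negMulLog_le_one_sub_self (by positivity [hw₀ i]))
  nlinarith

theorem sum_negMulLog_lt_log_card {w : ι → ℝ} (hw₀ : ∀ i, 0 ≤ w i) (hw : ∑ i, w i = 1)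
    {j : ι} (hj : w j ≠ (Fintype.card ι : ℝ)⁻¹) :
    ∑ i, negMulLog (w i) < log (Fintype.card ι) := by
  have hn : (0 : ℝ) < Fintype.card ι := by
    have : Nonempty ι := ⟨j⟩
    exact_mod_cast Fintype.card_pos
  have key := card_mul_log_card_sub_sum_negMulLog hw
  have : 0 < ∑ i, (1 - Fintype.card ι * w i - negMulLog (Fintype.card ι * w i)) := by
    refine sum_pos' (fun i _ => sub_nonneg.2 (negMulLog_le_one_sub_self (by positivity [hw₀ i])))
      ⟨j, mem_univ j, sub_pos.2 (negMulLog_lt_one_sub_self (by positivity [hw₀ j]) ?_)⟩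
    rwa [ne_eq, ← eq_inv_mul_iff_mul_eq₀ hn.ne', mul_one]
  nlinarith

end Entropy

section Quantizer

variable {Kx K N : ℕ}

theorem convex_Δset : Convex ℝ (Δset N K) := by
  intro q hq r hr a b ha hb hab
  refine ⟨fun ν k => ?_, fun k => ?_⟩
  · simp only [Pi.add_apply, Pi.smul_apply, smul_eq_mul]
    have := hq.1 ν k; have := hr.1 ν k
    positivity
  · simp only [Pi.add_apply, Pi.smul_apply, smul_eq_mul, sum_add_distrib, ← mul_sum, hq.2 k,
      hr.2 k, hab, mul_one]

theorem Hcond_eq_sum_negMulLog (p : Fin K → ℝ) (q : Fin N → Fin K → ℝ) :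
    Hcond p q = ∑ k, p k * ∑ ν, negMulLog (q ν k) := by
  simp only [Hcond, negMulLog, neg_mul, sum_neg_distrib, mul_neg]

theorem concaveOn_Hcond {p : Fin K → ℝ} (hp : ∀ k, 0 ≤ p k) :
    ConcaveOn ℝ (Δset N K) (Hcond p) := by
  refine ⟨convex_Δset, fun q hq r hr a b ha hb hab => ?_⟩
  have hcol : ∀ ν k, a * negMulLog (q ν k) + b * negMulLog (r ν k) ≤
      negMulLog (a * q ν k + b * r ν k) := fun ν k =>
    concaveOn_negMulLog.2 (Set.mem_Ici.2 (hq.1 ν k)) (Set.mem_Ici.2 (hr.1 ν k)) ha hb hab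
  calc a • Hcond p q + b • Hcond p r
      = ∑ k, p k * ∑ ν, (a * negMulLog (q ν k) + b * negMulLog (r ν k)) := by
        simp only [Hcond_eq_sum_negMulLog, smul_eq_mul, mul_sum, sum_add_distrib, mul_add]
        congr 1 <;> (congr 1; ext k; congr 1; ext ν; ring)
    _ ≤ Hcond p (a • q + b • r) := by
        rw [Hcond_eq_sum_negMulLog]
        gcongr with k _ ν _
        · exact hp k
        · exact hcol ν k

noncomputable def uniformQuantizer (N K : ℕ) : Fin N → Fin K → ℝ := fun _ _ => (N : ℝ)⁻¹

theorem uniformQuantizer_mem_Δset (hN : N ≠ 0) : uniformQuantizer N K ∈ Δset N K :=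
  ⟨fun _ _ => inv_nonneg.2 N.cast_nonneg, fun _ => by simp [uniformQuantizer, hN]⟩

theorem Hcond_uniformQuantizer {p : Fin K → ℝ} (hp : ∑ k, p k = 1) :
    Hcond p (uniformQuantizer N K) = log N := by
  simp only [Hcond_eq_sum_negMulLog, uniformQuantizer, ← sum_mul, hp, one_mul, sum_const,
    card_univ, Fintype.card_fin, nsmul_eq_mul, negMulLog, neg_mul, log_inv, mul_neg, neg_neg]
  rcases eq_or_ne (N : ℝ) 0 with hN | hN
  · simp [hN]
  · rw [mul_inv_cancel₀ hN, one_mul]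

theorem Hcond_lt_log_of_ne_uniformQuantizer {p : Fin K → ℝ} (hp : ∀ k, 0 < p k)
    (hpsum : ∑ k, p k = 1) {q : Fin N → Fin K → ℝ} (hq : q ∈ Δset N K)
    (hne : q ≠ uniformQuantizer N K) : Hcond p q < log N := by
  obtain ⟨ν₀, k₀, hq₀⟩ : ∃ ν k, q ν k ≠ (N : ℝ)⁻¹ := by
    by_contra! h
    exact hne (funext fun ν => funext fun k => h ν k)
  have hcol : ∀ k, ∑ ν, negMulLog (q ν k) ≤ log N := fun k => by
    simpa using sum_negMulLog_le_log_card (fun ν => hq.1 ν k) (hq.2 k)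
  have hcol₀ : ∑ ν, negMulLog (q ν k₀) < log N := by
    simpa using sum_negMulLog_lt_log_card (fun ν => hq.1 ν k₀) (hq.2 k₀) (j := ν₀)
      (by simpa using hq₀)
  rw [Hcond_eq_sum_negMulLog]
  calc ∑ k, p k * ∑ ν, negMulLog (q ν k) < ∑ k, p k * log N :=
        sum_lt_sum (fun k _ => mul_le_mul_of_nonneg_left (hcol k) (hp k).le)
          ⟨k₀, mem_univ k₀, mul_lt_mul_of_pos_left hcol₀ (hp k₀)⟩
    _ = log N := by rw [← sum_mul, hpsum, one_mul]

theorem sum_pXN_left (P : Fin Kx → Fin K → ℝ) (q : Fin N → Fin K → ℝ) (ν : Fin N) :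
    ∑ x, pXN P q x ν = pN (pY P) q ν := by
  simp only [pXN, pN, pY, sum_mul]
  exact sum_comm

theorem sum_pXN_right (P : Fin Kx → Fin K → ℝ) {q : Fin N → Fin K → ℝ}
    (hq : ∀ k, ∑ ν, q ν k = 1) (x : Fin Kx) : ∑ ν, pXN P q x ν = pX P x := by
  simp only [pXN, pX]
  rw [sum_comm]
  simp only [← mul_sum, hq, mul_one]

theorem IXN_eq_zero_of_indep {P : Fin Kx → Fin K → ℝ} (hP : ∑ k, pY P k = 1) (r : Fin N → ℝ) :
    IXN P (fun ν _ => r ν) = 0 := by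
  have hpXN : ∀ x ν, pXN P (fun ν _ => r ν) x ν = pX P x * r ν := fun x ν => by
    simp only [pXN, pX, sum_mul]
  have hpN : ∀ ν, pN (pY P) (fun ν _ => r ν) ν = r ν := fun ν => by
    simp only [pN, ← sum_mul, hP, one_mul]
  simp only [IXN, hpXN, hpN]
  refine sum_eq_zero fun x _ => sum_eq_zero fun ν _ => ?_
  rcases eq_or_ne (pX P x * r ν) 0 with h | h
  · simp [h]
  · simp [div_self h]

-- `H(X) + H(Y_N) - H(X,Y_N)` is continuous in `q`, unlike the defining formula, whose
-- `log (· / pN)` jumps where `pN` vanishes.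
theorem IXN_eq_entropy {P : Fin Kx → Fin K → ℝ} (hP : ∀ x k, 0 ≤ P x k)
    (hpX : ∀ x, 0 < pX P x) {q : Fin N → Fin K → ℝ} (hq : q ∈ Δset N K) :
    IXN P q = ∑ x, negMulLog (pX P x) + ∑ ν, negMulLog (pN (pY P) q ν) -
      ∑ x, ∑ ν, negMulLog (pXN P q x ν) := by
  have hpXN₀ : ∀ x ν, 0 ≤ pXN P q x ν := fun x ν =>
    sum_nonneg fun k _ => mul_nonneg (hP x k) (hq.1 ν k)
  have hterm : ∀ x ν, pXN P q x ν * log (pXN P q x ν / (pX P x * pN (pY P) q ν)) =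
      -negMulLog (pXN P q x ν) - pXN P q x ν * log (pX P x) -
        pXN P q x ν * log (pN (pY P) q ν) := fun x ν => by
    rcases (hpXN₀ x ν).eq_or_lt with h | h
    · simp [← h]
    · have hpN : 0 < pN (pY P) q ν := by
        rw [← sum_pXN_left]
        exact h.trans_le (single_le_sum (fun x _ => hpXN₀ x ν) (mem_univ x))
      rw [log_div h.ne' (mul_pos (hpX x) hpN).ne', log_mul (hpX x).ne' hpN.ne', negMulLog]
      ring
  have hX : ∑ x, ∑ ν, pXN P q x ν * log (pX P x) = -∑ x, negMulLog (pX P x) := by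
    simp only [← sum_mul, sum_pXN_right P hq.2, negMulLog, neg_mul, sum_neg_distrib, neg_neg]
  have hN : ∑ x, ∑ ν, pXN P q x ν * log (pN (pY P) q ν) = -∑ ν, negMulLog (pN (pY P) q ν) := by
    rw [sum_comm]
    simp only [← sum_mul, sum_pXN_left, negMulLog, neg_mul, sum_neg_distrib, neg_neg]
  simp only [IXN, hterm, sum_sub_distrib, sum_neg_distrib, hX, hN]
  ring

theorem continuousOn_IXN {P : Fin Kx → Fin K → ℝ} (hP : ∀ x k, 0 ≤ P x k)
    (hpX : ∀ x, 0 < pX P x) : ContinuousOn (IXN (N := N) P) (Δset N K) := by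
  refine ContinuousOn.congr ?_ fun q hq => IXN_eq_entropy hP hpX hq
  refine Continuous.continuousOn ?_
  simp only [pN, pXN]
  fun_prop

end Quantizer

theorem stmt2_general {Kx K N : ℕ} (P : Fin Kx → Fin K → ℝ) (hP : ∀ x k, 0 ≤ P x k)
    (hPsum : ∑ x, ∑ k, P x k = 1) (hpY : ∀ k, 0 < pY P k) (hpX : ∀ x, 0 < pX P x)
    (I0 : ℝ) (hI0 : 0 < I0)
    (qs : Fin N → Fin K → ℝ) (hqs : qs ∈ Δset N K) (hfeas : I0 ≤ IXN P qs)
    (hmax : ∀ q ∈ Δset N K, I0 ≤ IXN P q → Hcond (pY P) q ≤ Hcond (pY P) qs) :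
    IXN P qs = I0 := by
  have hpY_sum : ∑ k, pY P k = 1 := by rw [← hPsum, sum_comm]; rfl
  have hK : K ≠ 0 := by rintro rfl; simp at hPsum
  have hN : N ≠ 0 := by rintro rfl; simpa using hqs.2 ⟨0, Nat.pos_of_ne_zero hK⟩
  by_contra hne
  have hlt : I0 < IXN P qs := hfeas.lt_of_ne' hne
  have hloc : IsLocalMaxOn (Hcond (pY P)) (Δset N K) qs := by
    filter_upwards [self_mem_nhdsWithin,
      (continuousOn_IXN hP hpX qs hqs).eventually (lt_mem_nhds hlt)] with q hq hIq
    exact hmax q hq hIq.le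
  have hglob := IsMaxOn.of_isLocalMaxOn_of_concaveOn hqs hloc (concaveOn_Hcond (hpY · |>.le))
  have hlog : log N ≤ Hcond (pY P) qs := by
    simpa [Hcond_uniformQuantizer hpY_sum] using hglob (uniformQuantizer_mem_Δset hN)
  have hunif : qs = uniformQuantizer N K := by
    by_contra h
    exact (Hcond_lt_log_of_ne_uniformQuantizer hpY hpY_sum hqs h).not_ge hlog
  have hzero : IXN P (uniformQuantizer N K) = 0 := IXN_eq_zero_of_indep hpY_sum _
  rw [hunif, hzero] at hlt
  linarith

theorem stmt2 {Kx K N : ℕ} (P : Fin Kx → Fin K → ℝ) (hP : ∀ x k, 0 ≤ P x k)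
    (hPsum : ∑ x, ∑ k, P x k = 1) (hpY : ∀ k, 0 < pY P k) (hpX : ∀ x, 0 < pX P x)
    (I0 : ℝ) (hI0 : 0 < I0)
    (hImax : ∃ q ∈ Δset N K, I0 ≤ IXN P q)
    (qs : Fin N → Fin K → ℝ) (hqs : qs ∈ Δset N K) (hfeas : I0 ≤ IXN P qs)
    (hmax : ∀ q ∈ Δset N K, I0 ≤ IXN P q → Hcond (pY P) q ≤ Hcond (pY P) qs) :
    IXN P qs = I0 :=
  stmt2_general P hP hPsum hpY hpX I0 hI0 qs hqs hfeas hmax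
end

section
/- At a stationary point q* of the annealed problem max_{q∈Δ} ( H(Y_N|Y)(q) + β I(X;Y_N)(q) ), where the Lagrange conditions give the explicit Gibbs form q*_{νk} = exp(β (∇I)_{νk}/p_k) / ∑_μ exp(β (∇I)_{μk}/p_k), the Lagrange multipliers λ_k = p_k (1 − ln ∑_ν exp(β (∇I)_{νk}/p_k)) satisfy d(∑_k λ_k)/dβ (computed treating (∇I)_{νk} as fixed) = −∑_{ν,k} q*_{νk} (∇I)_{νk} = −(q* · ∇I) = −I(q*). -/
open Real

/-! The derivative of `b ↦ log ∑ᵢ exp (b aᵢ)` is the mean of `a` under the Gibbs weights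
`exp (b aᵢ) / ∑ⱼ exp (b aⱼ)`. With `a = g(·, k) / p_k` these weights are exactly `q*(·, k)`, so
`dλ_k/dβ = -∑_ν q*_{νk} g_{νk}`, and summing over `k` gives `-(q* · g) = -I`. -/

open Finset

theorem hasDerivAt_log_sum_exp_mul {ι : Type*} [Fintype ι] [Nonempty ι] (a : ι → ℝ) (β : ℝ) :
    HasDerivAt (fun b => Real.log (∑ i, Real.exp (b * a i)))
      (∑ i, Real.exp (β * a i) / (∑ j, Real.exp (β * a j)) * a i) β := by
  have hZ : (∑ j, Real.exp (β * a j)) ≠ 0 := (sum_pos (fun j _ => exp_pos _) univ_nonempty).ne'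
  have hsum : HasDerivAt (fun b => ∑ i, Real.exp (b * a i)) (∑ i, Real.exp (β * a i) * a i) β :=
    HasDerivAt.fun_sum fun i _ => by
      simpa using ((hasDerivAt_id' β).mul_const (a i)).exp
  convert hsum.log hZ using 1
  rw [sum_div]
  exact sum_congr rfl fun i _ => div_mul_eq_mul_div _ _ _

theorem stmt11 {K N : ℕ} (hN : 0 < N) (p : Fin K → ℝ) (hp : ∀ k, 0 < p k)
    (g : Fin N → Fin K → ℝ) (β Ival : ℝ) (qs : Fin N → Fin K → ℝ)
    (hGibbs : ∀ ν k, qs ν k =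
      Real.exp (β * g ν k / p k) / ∑ μ, Real.exp (β * g μ k / p k))
    (hEuler : ∑ ν, ∑ k, qs ν k * g ν k = Ival) :
    HasDerivAt (fun b => ∑ k, p k * (1 - Real.log (∑ ν, Real.exp (b * g ν k / p k))))
      (-Ival) β := by
  have : Nonempty (Fin N) := ⟨⟨0, hN⟩⟩
  have hterm : ∀ k, HasDerivAt (fun b => p k * (1 - Real.log (∑ ν, Real.exp (b * g ν k / p k))))
      (-∑ ν, qs ν k * g ν k) β := by
    intro k
    simp_rw [mul_div_assoc]
    refine (((hasDerivAt_log_sum_exp_mul (fun ν => g ν k / p k) β).const_sub 1).const_mul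
      (p k)).congr_deriv ?_
    simp only [hGibbs, mul_div_assoc, mul_neg, neg_inj, mul_sum]
    refine sum_congr rfl fun ν _ => ?_
    field_simp [(hp k).ne']
  rw [← hEuler, sum_comm, ← sum_neg_distrib]
  exact HasDerivAt.fun_sum fun k _ => hterm k
end

section
/- (Explicit gradient formula) For a stochastic quantizer q with positive entries, the partial derivative of the induced mutual information I(X;Y_N) with respect to q_{νk} is ∂I/∂q_{νk} = ∑_x p(x, y_k) ln( p(x|ν) / p(x) ), where p(x|ν) = (∑_j p(x,y_j) q_{νj}) / (∑_j p(y_j) q_{νj}). -/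
open Real

/-! Moving the single coordinate `q ν0 k0` to `t` leaves every column `ν ≠ ν0` unchanged and makes
`p(x,ν0)` and `p(ν0)` affine in `t`, with slopes `p(x,y_k0)` and `p(y_k0)`. Differentiating
`A log (A / (c B))` gives `A' log (A / (c B)) + A' - A B' / B`; summed over `x`, the last two
terms cancel because `∑ₓ p(x|ν0) = 1`, leaving the logarithmic term. -/

open Finset Function

theorem HasDerivAt.mul_log_div {f g : ℝ → ℝ} {f' g' t : ℝ} (hf : HasDerivAt f f' t)
    (hg : HasDerivAt g g' t) (hf0 : f t ≠ 0) (hg0 : g t ≠ 0) :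
    HasDerivAt (fun s => f s * Real.log (f s / g s))
      (f' * Real.log (f t / g t) + (f' - f t * g' / g t)) t := by
  refine (hf.mul ((hf.div hg hg0).log (div_ne_zero hf0 hg0))).congr_deriv ?_
  simp only [Pi.div_apply]
  field_simp

theorem hasDerivAt_sum_mul_update {ι κ : Type*} [Fintype κ] [DecidableEq ι] [DecidableEq κ]
    (w : κ → ℝ) (q : ι → κ → ℝ) (i : ι) (j : κ) (ν : ι) (t : ℝ) :
    HasDerivAt (fun s => ∑ k, w k * update q i (update (q i) j s) ν k)
      (if ν = i then w j else 0) t := by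
  rcases eq_or_ne ν i with rfl | hν
  · have hcoord (k : κ) := hasDerivAt_pi.1 (hasDerivAt_update (q ν) j t) k
    simpa [Pi.single_apply] using
      HasDerivAt.fun_sum (u := univ) fun k _ => (hcoord k).const_mul (w k)
  · simpa [update_of_ne hν, hν] using hasDerivAt_const t (∑ k, w k * q ν k)

theorem sum_pXN {Kx K N : ℕ} (P : Fin Kx → Fin K → ℝ) (q : Fin N → Fin K → ℝ) (ν : Fin N) :
    ∑ x, pXN P q x ν = pN (pY P) q ν := by
  simp only [pXN, pN, pY, sum_mul]
  exact sum_comm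

section Positivity

variable {Kx K N : ℕ} [Nonempty (Fin K)] {P : Fin Kx → Fin K → ℝ} (hP : ∀ x k, 0 < P x k)
include hP

theorem pX_pos (x : Fin Kx) : 0 < pX P x :=
  sum_pos (fun k _ => hP x k) univ_nonempty

variable {q : Fin N → Fin K → ℝ} (hq : ∀ ν k, 0 < q ν k)
include hq

theorem pXN_pos (x : Fin Kx) (ν : Fin N) : 0 < pXN P q x ν :=
  sum_pos (fun k _ => mul_pos (hP x k) (hq ν k)) univ_nonempty

theorem pN_pY_pos (x : Fin Kx) (ν : Fin N) : 0 < pN (pY P) q ν :=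
  sum_pXN P q ν ▸ sum_pos (fun x _ => pXN_pos hP hq x ν) ⟨x, mem_univ x⟩

end Positivity

theorem hasDerivAt_IXN_summand {Kx K N : ℕ} {P : Fin Kx → Fin K → ℝ} (hP : ∀ x k, 0 < P x k)
    {q : Fin N → Fin K → ℝ} (hq : ∀ ν k, 0 < q ν k) (ν0 : Fin N) (k0 : Fin K)
    (x : Fin Kx) (ν : Fin N) :
    HasDerivAt (fun t => pXN P (update q ν0 (update (q ν0) k0 t)) x ν *
        Real.log (pXN P (update q ν0 (update (q ν0) k0 t)) x ν /
          (pX P x * pN (pY P) (update q ν0 (update (q ν0) k0 t)) ν)))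
      (if ν = ν0 then
        P x k0 * Real.log (pXN P q x ν0 / (pX P x * pN (pY P) q ν0)) +
          (P x k0 - pY P k0 * (pXN P q x ν0 / pN (pY P) q ν0))
      else 0) (q ν0 k0) := by
  have : Nonempty (Fin K) := ⟨k0⟩
  have hA := hasDerivAt_sum_mul_update (P x) q ν0 k0 ν (q ν0 k0)
  have hB := (hasDerivAt_sum_mul_update (pY P) q ν0 k0 ν (q ν0 k0)).const_mul (pX P x)
  have hX := (pX_pos hP x).ne'
  have hN := (pN_pY_pos hP hq x ν).ne'
  have h := hA.mul_log_div hB (by simpa [pXN] using (pXN_pos hP hq x ν).ne')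
    (by simpa [pN] using mul_ne_zero hX hN)
  simp only [update_eq_self] at h
  refine h.congr_deriv ?_
  split_ifs with hν
  · subst hν
    simp only [pXN, pN] at hN ⊢
    field_simp
  · simp

theorem sum_pXN_div_pN {Kx K N : ℕ} (P : Fin Kx → Fin K → ℝ) (q : Fin N → Fin K → ℝ) (ν : Fin N)
    (hν : pN (pY P) q ν ≠ 0) : ∑ x, pXN P q x ν / pN (pY P) q ν = 1 := by
  rw [← sum_div, sum_pXN, div_self hν]

theorem stmt18_general {Kx K N : ℕ} (P : Fin Kx → Fin K → ℝ) (hP : ∀ x k, 0 < P x k)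
    (q : Fin N → Fin K → ℝ) (hq : ∀ ν k, 0 < q ν k)
    (ν0 : Fin N) (k0 : Fin K) :
    HasDerivAt (fun t => IXN P (Function.update q ν0 (Function.update (q ν0) k0 t)))
      (gradI P q ν0 k0) (q ν0 k0) := by
  have h := HasDerivAt.fun_sum (u := univ) fun x _ => HasDerivAt.fun_sum (u := univ)
    fun ν _ => hasDerivAt_IXN_summand hP hq ν0 k0 x ν
  simp only [sum_ite_eq', mem_univ, if_true] at h
  refine h.congr_deriv ?_
  rcases isEmpty_or_nonempty (Fin Kx) with _ | ⟨⟨x⟩⟩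
  · simp [gradI]
  have : Nonempty (Fin K) := ⟨k0⟩
  have hcond := sum_pXN_div_pN P q ν0 (pN_pY_pos hP hq x ν0).ne'
  rw [sum_add_distrib, sum_sub_distrib, ← mul_sum, hcond, mul_one, pY, sub_self, add_zero]
  simp only [gradI, div_div, mul_comm (pN (pY P) q ν0)]

theorem stmt18 {Kx K N : ℕ} (P : Fin Kx → Fin K → ℝ) (hP : ∀ x k, 0 < P x k)
    (q : Fin N → Fin K → ℝ) (hq : ∀ ν k, 0 < q ν k) (hsum : ∀ k, ∑ ν, q ν k = 1)
    (ν0 : Fin N) (k0 : Fin K) :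
    HasDerivAt (fun t => IXN P (Function.update q ν0 (Function.update (q ν0) k0 t)))
      (gradI P q ν0 k0) (q ν0 k0) :=
  stmt18_general P hP q hq ν0 k0
end

section
/- (Gibbs form of stationary points) A quantizer q* in the interior of Δ is a stationary point of the Lagrangian H(Y_N|Y)(q) + β I(X;Y_N)(q) + ∑_k λ_k(∑_ν q_{νk} − 1) (with H computed in natural log) if and only if q*_{νk} = exp( β (∇I)_{νk}/p_k ) / ∑_μ exp( β (∇I)_{μk}/p_k ), where (∇I)_{νk} = ∂I(X;Y_N)/∂q_{νk} evaluated at q*, and in that case λ_k = p_k(1 − ln ∑_ν exp(β(∇I)_{νk}/p_k)). -/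
open Real

theorem stmt19 {Kx K N : ℕ} (P : Fin Kx → Fin K → ℝ) (hpY : ∀ k, 0 < pY P k)
    (β : ℝ) (qs : Fin N → Fin K → ℝ) (hqs : ∀ ν k, 0 < qs ν k)
    (hsum : ∀ k, ∑ ν, qs ν k = 1) :
    ((∃ lam : Fin K → ℝ, ∀ ν k,
        -(pY P k) * (Real.log (qs ν k) + 1) + β * gradI P qs ν k + lam k = 0) ↔
      (∀ ν k, qs ν k = Real.exp (β * gradI P qs ν k / pY P k) /
          ∑ μ, Real.exp (β * gradI P qs μ k / pY P k))) ∧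
    (∀ lam : Fin K → ℝ,
      (∀ ν k, -(pY P k) * (Real.log (qs ν k) + 1) + β * gradI P qs ν k + lam k = 0) →
      ∀ k, lam k = pY P k *
        (1 - Real.log (∑ ν, Real.exp (β * gradI P qs ν k / pY P k)))) := by
  have hS : ∀ (ν : Fin N) (k : Fin K),
      0 < ∑ μ, Real.exp (β * gradI P qs μ k / pY P k) := by
    intro ν k
    have : Nonempty (Fin N) := ⟨ν⟩
    exact Finset.sum_pos (fun μ _ => Real.exp_pos _) Finset.univ_nonempty
  have main : ∀ lam : Fin K → ℝ,
      (∀ ν k, -(pY P k) * (Real.log (qs ν k) + 1) + β * gradI P qs ν k + lam k = 0) →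
      ∀ (ν : Fin N) (k : Fin K),
        (∑ μ, Real.exp (β * gradI P qs μ k / pY P k)) * Real.exp (lam k / pY P k - 1) = 1 := by
    intro lam hl ν k
    have hq : ∀ μ : Fin N, qs μ k =
        Real.exp (β * gradI P qs μ k / pY P k) * Real.exp (lam k / pY P k - 1) := by
      intro μ
      have h := hl μ k
      have hpk := hpY k
      have hlog : Real.log (qs μ k) =
          β * gradI P qs μ k / pY P k + (lam k / pY P k - 1) := by
        field_simp
        nlinarith [h]
      rw [← Real.exp_log (hqs μ k), hlog, Real.exp_add]
    calc (∑ μ, Real.exp (β * gradI P qs μ k / pY P k)) * Real.exp (lam k / pY P k - 1)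
        = ∑ μ, qs μ k := by
          rw [Finset.sum_mul]
          exact Finset.sum_congr rfl fun μ _ => (hq μ).symm
      _ = 1 := hsum k
  have qform : ∀ lam : Fin K → ℝ,
      (∀ ν k, -(pY P k) * (Real.log (qs ν k) + 1) + β * gradI P qs ν k + lam k = 0) →
      ∀ (ν : Fin N) (k : Fin K), qs ν k = Real.exp (β * gradI P qs ν k / pY P k) /
          ∑ μ, Real.exp (β * gradI P qs μ k / pY P k) := by
    intro lam hl ν k
    have hm := main lam hl ν k
    have hSk := hS ν k
    have he : Real.exp (lam k / pY P k - 1) =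
        (∑ μ, Real.exp (β * gradI P qs μ k / pY P k))⁻¹ := by
      field_simp
      linarith [hm]
    have h := hl ν k
    have hpk := hpY k
    have hlog : Real.log (qs ν k) =
        β * gradI P qs ν k / pY P k + (lam k / pY P k - 1) := by
      field_simp
      nlinarith [h]
    rw [← Real.exp_log (hqs ν k), hlog, Real.exp_add, he]
    simp only [div_eq_mul_inv]
  constructor
  · constructor
    · rintro ⟨lam, hl⟩
      exact qform lam hl
    · intro hqf
      refine ⟨fun k => pY P k *
        (1 - Real.log (∑ ν, Real.exp (β * gradI P qs ν k / pY P k))), fun ν k => ?_⟩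
      have hSk := hS ν k
      have hpk := hpY k
      have hlog : Real.log (qs ν k) = β * gradI P qs ν k / pY P k -
          Real.log (∑ μ, Real.exp (β * gradI P qs μ k / pY P k)) := by
        rw [hqf ν k, Real.log_div (Real.exp_ne_zero _) (ne_of_gt hSk), Real.log_exp]
      rw [hlog]
      field_simp
      ring
  · intro lam hl k
    by_cases hN : Nonempty (Fin N)
    · obtain ⟨ν⟩ := hN
      have hm := main lam hl ν k
      have hSk := hS ν k
      have hpk := hpY k
      have he : Real.exp (lam k / pY P k - 1) =
          (∑ μ, Real.exp (β * gradI P qs μ k / pY P k))⁻¹ :=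
        eq_inv_of_mul_eq_one_left (by rw [mul_comm]; exact hm)
      have hlam := congrArg Real.log he
      rw [Real.log_exp, Real.log_inv] at hlam
      have h3 : lam k / pY P k =
          1 - Real.log (∑ μ, Real.exp (β * gradI P qs μ k / pY P k)) := by linarith
      rw [div_eq_iff (ne_of_gt hpk)] at h3
      rw [h3]; ring
    · exfalso
      haveI : IsEmpty (Fin N) := not_nonempty_iff.mp hN
      have := hsum k
      rw [Finset.univ_eq_empty, Finset.sum_empty] at this
      norm_num at this
end
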